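/- arXiv:1905.05917 — 2 statements merged into one kernel-verified Lean document; each statement's English description precedes it below -/
import Mathlib

section
/- Let d ≥ 1, let T ≥ 1 be an integer, let G, D > 0, set N = ⌈(log₂ T)/2⌉, η_i = 2^{−i}/(5DG) for i = 0,…,N, η^c = 1/(2GD√T), C = 1 + 1/(N+1), and priors π^c = 1/3 and π_i^s = π_i^ℓ = C/(3(i+1)(i+2)) for i = 0,…,N. Let 𝒟 ⊆ ℝ^d be a convex set of diameter at most D, and for each t ∈ {1,…,T} let x_t^c, x_t^{i,s}, x_t^{i,ℓ} ∈ 𝒟 and g_t ∈ ℝ^d with ‖g_t‖ ≤ G. Define x_t recursively as the tilted exponentially weighted average x_t = (π^c η^c W_t^c x_t^c + Σ_{i=0}^N η_i(π_i^s W_t^{i,s} x_t^{i,s} + π_i^ℓ W_t^{i,ℓ} x_t^{i,ℓ})) / (π^c η^c W_t^c + Σ_{i=0}^N η_i(π_i^s W_t^{i,s} + π_i^ℓ W_t^{i,ℓ})), where W_t^c = exp(−Σ_{τ=1}^{t−1} c_τ(x_τ^c)), W_t^{i,s} = exp(−Σ_{τ=1}^{t−1} s_τ^{η_i}(x_τ^{i,s})),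 W_t^{i,ℓ} = exp(−Σ_{τ=1}^{t−1} ℓ_τ^{η_i}(x_τ^{i,ℓ})). Then for every i ∈ {0,…,N}: Σ_{t=1}^T s_t^{η_i}(x_t) − Σ_{t=1}^T s_t^{η_i}(x_t^{i,s}) ≤ 2 ln(√3((log₂ T)/2 + 3)) and Σ_{t=1}^T ℓ_t^{η_i}(x_t) − Σ_{t=1}^T ℓ_t^{η_i}(x_t^{i,ℓ}) ≤ 2 ln(√3((log₂ T)/2 + 3)). -/
/-!
The combined point `x t` is the centre of mass of the experts' points under the weights `π η W`,
so it lies in `𝒟` and the linear terms cancel: `∑ π η W ⟪x t - y, g t⟫ = 0`. Every surrogate loss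
`f` satisfies `exp (-f) ≤ 1 + η ⟪x t - y, g t⟫`, by `exp (z - z²) ≤ 1 + z` for `|z| ≤ 1/2`. Hence
the potential `∑ π W` never exceeds its initial value `∑ π = 1`, so `π_i exp (-∑ f) ≤ 1`. Since
every surrogate vanishes at `x t`, the regret against expert `i` is at most
`log (1 / π_i) = log (3 (i + 1) (i + 2) / C)`, and `i ≤ N ≤ log₂ T / 2 + 1`.
-/

open Finset Real

lemma Real.exp_sub_sq_le_one_add {z : ℝ} (hz : |z| ≤ 1 / 2) : exp (z - z ^ 2) ≤ 1 + z := by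
  obtain ⟨hz₁, hz₂⟩ := abs_le.mp hz
  have hy : |z - z ^ 2| ≤ 1 := abs_le.mpr ⟨by nlinarith, by nlinarith⟩
  have h := (abs_le.mp (Real.exp_bound hy (n := 4) (by norm_num))).2
  rw [← abs_pow, abs_of_nonneg (by positivity)] at h
  norm_num [sum_range_succ, Nat.factorial] at h
  have hz₃ : 0 ≤ (1 / 2 - z) * (z + 1 / 2) := by nlinarith
  nlinarith [mul_nonneg hz₃ (sq_nonneg z), mul_nonneg hz₃ (sq_nonneg (z * z)),
    mul_nonneg (by linarith : (0 : ℝ) ≤ z + 1 / 2) (sq_nonneg z)]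

lemma Real.exp_sub_le_one_add {z q : ℝ} (hz : |z| ≤ 1 / 2) (hq : z ^ 2 ≤ q) :
    exp (z - q) ≤ 1 + z :=
  (exp_le_exp.mpr (by linarith)).trans (exp_sub_sq_le_one_add hz)

section Surrogates

variable {E : Type*} [NormedAddCommGroup E] [InnerProductSpace ℝ E] {x y g : E} {η D G : ℝ}

lemma abs_inner_sub_le (hxy : ‖x - y‖ ≤ D) (hg : ‖g‖ ≤ G) : |inner ℝ (x - y) g| ≤ D * G :=
  (abs_real_inner_le_norm _ _).trans (mul_le_mul hxy hg (norm_nonneg _) ((norm_nonneg _).trans hxy))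

lemma abs_mul_inner_sub_le_half (hη : 0 ≤ η) (hηDG : η * (D * G) ≤ 1 / 2) (hxy : ‖x - y‖ ≤ D)
    (hg : ‖g‖ ≤ G) : |η * inner ℝ (x - y) g| ≤ 1 / 2 := by
  rw [abs_mul, abs_of_nonneg hη]
  exact (mul_le_mul_of_nonneg_left (abs_inner_sub_le hxy hg) hη).trans hηDG

lemma exp_neg_convexSurrogate_le (hη : 0 ≤ η) (hηDG : η * (D * G) ≤ 1 / 2)
    (hxy : ‖x - y‖ ≤ D) (hg : ‖g‖ ≤ G) :
    exp (-(-η * inner ℝ (x - y) g + (η * G * D) ^ 2)) ≤ 1 + η * inner ℝ (x - y) g := by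
  refine le_of_eq_of_le (congrArg exp (by ring))
    (exp_sub_le_one_add (q := (η * G * D) ^ 2) (abs_mul_inner_sub_le_half hη hηDG hxy hg) ?_)
  rw [← sq_abs, abs_mul, abs_of_nonneg hη, show η * G * D = η * (D * G) by ring]
  exact pow_le_pow_left₀ (by positivity) (mul_le_mul_of_nonneg_left (abs_inner_sub_le hxy hg) hη) 2

lemma exp_neg_stronglyConvexSurrogate_le (hη : 0 ≤ η) (hηDG : η * (D * G) ≤ 1 / 2)
    (hxy : ‖x - y‖ ≤ D) (hg : ‖g‖ ≤ G) :
    exp (-(-η * inner ℝ (x - y) g + η ^ 2 * G ^ 2 * ‖x - y‖ ^ 2)) ≤ 1 + η * inner ℝ (x - y) g := by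
  refine le_of_eq_of_le (congrArg exp (by ring))
    (exp_sub_le_one_add (q := η ^ 2 * G ^ 2 * ‖x - y‖ ^ 2)
      (abs_mul_inner_sub_le_half hη hηDG hxy hg) ?_)
  rw [← sq_abs, abs_mul, abs_of_nonneg hη,
    show η ^ 2 * G ^ 2 * ‖x - y‖ ^ 2 = (η * (‖x - y‖ * G)) ^ 2 by ring]
  exact pow_le_pow_left₀ (by positivity)
    (mul_le_mul_of_nonneg_left (abs_inner_sub_le le_rfl hg) hη) 2

lemma exp_neg_expConcaveSurrogate_le (hη : 0 ≤ η) (hηDG : η * (D * G) ≤ 1 / 2)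
    (hxy : ‖x - y‖ ≤ D) (hg : ‖g‖ ≤ G) :
    exp (-(-η * inner ℝ (x - y) g + η ^ 2 * inner ℝ (x - y) g ^ 2)) ≤
      1 + η * inner ℝ (x - y) g :=
  le_of_eq_of_le (congrArg exp (by ring))
    (exp_sub_le_one_add (abs_mul_inner_sub_le_half hη hηDG hxy hg) (mul_pow _ _ 2).le)

end Surrogates

lemma Finset.sum_smul_centerMass_sub_eq_zero {R E ι : Type*} [Field R] [AddCommGroup E]
    [Module R E] (t : Finset ι) {w : ι → R} (z : ι → E) (hw : ∑ i ∈ t, w i ≠ 0) :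
    ∑ i ∈ t, w i • (t.centerMass w z - z i) = 0 := by
  simp only [smul_sub, sum_sub_distrib, ← sum_smul, centerMass, smul_inv_smul₀ hw, sub_self]

theorem sum_mul_exp_neg_sum_le_of_tilt {ι : Type*} (K : Finset ι) (w η : ι → ℝ)
    (hw : ∀ k ∈ K, 0 ≤ w k) (f r : ℕ → ι → ℝ) (T : ℕ)
    (hf : ∀ t ∈ Icc 1 T, ∀ k ∈ K, exp (-f t k) ≤ 1 + η k * r t k)
    (htilt : ∀ t ∈ Icc 1 T,
      ∑ k ∈ K, w k * η k * exp (-∑ τ ∈ Icc 1 (t - 1), f τ k) * r t k = 0) :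
    ∑ k ∈ K, w k * exp (-∑ t ∈ Icc 1 T, f t k) ≤ ∑ k ∈ K, w k := by
  induction T with
  | zero => simp
  | succ n ih =>
    have hn : Icc 1 n ⊆ Icc 1 (n + 1) := Icc_subset_Icc_right n.le_succ
    have hlast : n + 1 ∈ Icc 1 (n + 1) := by simp
    calc ∑ k ∈ K, w k * exp (-∑ t ∈ Icc 1 (n + 1), f t k)
        = ∑ k ∈ K, w k * exp (-∑ t ∈ Icc 1 n, f t k) * exp (-f (n + 1) k) := by
          refine sum_congr rfl fun k _ => ?_
          rw [sum_Icc_succ_top (by omega), neg_add, exp_add, mul_assoc]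
      _ ≤ ∑ k ∈ K, w k * exp (-∑ t ∈ Icc 1 n, f t k) * (1 + η k * r (n + 1) k) := by
          gcongr with k hk
          · exact mul_nonneg (hw k hk) (exp_pos _).le
          · exact hf _ hlast k hk
      _ = ∑ k ∈ K, w k * exp (-∑ t ∈ Icc 1 n, f t k) := by
          have h := htilt _ hlast
          simp only [Nat.add_sub_cancel] at h
          simp only [mul_add, mul_one, sum_add_distrib]
          rw [add_eq_left, ← h]
          exact sum_congr rfl fun k _ => by ring
      _ ≤ ∑ k ∈ K, w k :=
          ih (fun t ht => hf t (hn ht)) (fun t ht => htilt t (hn ht))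

theorem tilted_exp_weights_regret_le {ι E : Type*} [NormedAddCommGroup E] [InnerProductSpace ℝ E]
    (K : Finset ι) (w η : ι → ℝ) (hw : ∀ k ∈ K, 0 < w k) (hη : ∀ k ∈ K, 0 < η k)
    (T : ℕ) (f : ℕ → ι → ℝ) (x g : ℕ → E) (y : ℕ → ι → E)
    (hx : ∀ t ∈ Icc 1 T, x t =
      K.centerMass (fun k => w k * η k * exp (-∑ τ ∈ Icc 1 (t - 1), f τ k)) (y t))
    (hf : ∀ t ∈ Icc 1 T, ∀ k ∈ K, exp (-f t k) ≤ 1 + η k * inner ℝ (x t - y t k) (g t))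
    {k : ι} (hk : k ∈ K) :
    -∑ t ∈ Icc 1 T, f t k ≤ log ((∑ j ∈ K, w j) / w k) := by
  have htilt : ∀ t ∈ Icc 1 T, ∑ j ∈ K,
      w j * η j * exp (-∑ τ ∈ Icc 1 (t - 1), f τ j) * inner ℝ (x t - y t j) (g t) = 0 := by
    intro t ht
    have hmass : ∑ j ∈ K, w j * η j * exp (-∑ τ ∈ Icc 1 (t - 1), f τ j) ≠ 0 :=
      (sum_pos (fun j hj => by have := hw j hj; have := hη j hj; positivity) ⟨k, hk⟩).ne'
    simp only [← real_inner_smul_left, ← sum_inner]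
    rw [hx t ht, sum_smul_centerMass_sub_eq_zero K _ hmass, inner_zero_left]
  have hpot := sum_mul_exp_neg_sum_le_of_tilt K w η (fun j hj => (hw j hj).le) f _ T hf htilt
  have hsingle : w k * exp (-∑ t ∈ Icc 1 T, f t k) ≤ ∑ j ∈ K, w j :=
    (single_le_sum (f := fun j => w j * exp (-∑ t ∈ Icc 1 T, f t j))
      (fun j hj => mul_nonneg (hw j hj).le (exp_pos _).le) hk).trans hpot
  have hwk := hw k hk
  rw [le_log_iff_exp_le (div_pos (hsingle.trans_lt' (by positivity)) hwk), le_div_iff₀ hwk]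
  linarith

lemma sum_insertNone_disjSum_self {α M : Type*} [AddCommMonoid M] (s : Finset α)
    (F : Option (α ⊕ α) → M) :
    ∑ k ∈ insertNone (s.disjSum s), F k =
      F none + ∑ i ∈ s, (F (some (.inl i)) + F (some (.inr i))) := by
  rw [sum_insertNone, sum_disjSum, sum_add_distrib]

lemma sum_inv_mul_succ (n : ℕ) :
    ∑ i ∈ range n, ((i + 1 : ℝ) * (i + 2))⁻¹ = n / (n + 1) := by
  induction n with
  | zero => simp
  | succ n ih =>
    rw [sum_range_succ, ih]
    push_cast
    field_simp
    ring

lemma one_third_add_sum_priors {n : ℕ} {C : ℝ} (hC : C = 1 + 1 / (n + 1)) :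
    (1 : ℝ) / 3 + ∑ i ∈ range (n + 1), (C / (3 * (i + 1) * (i + 2)) + C / (3 * (i + 1) * (i + 2)))
      = 1 := by
  have h : ∀ i : ℕ, C / (3 * (i + 1) * (i + 2)) + C / (3 * (i + 1) * (i + 2))
      = 2 * (n + 2) / (3 * (n + 1)) * ((i + 1 : ℝ) * (i + 2))⁻¹ := fun i => by
    subst hC
    field_simp
    ring
  rw [sum_congr rfl fun i _ => h i, ← mul_sum, sum_inv_mul_succ]
  push_cast
  field_simp
  ring

lemma log_inv_prior_le {L C : ℝ} (hL : 0 ≤ L) (hC : 1 ≤ C) {i : ℕ} (hi : i ≤ ⌈L / 2⌉₊) :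
    log (3 * (i + 1) * (i + 2) / C) ≤ 2 * log (√3 * (L / 2 + 3)) := by
  have hiL : (i : ℝ) + 1 ≤ L / 2 + 2 := by
    have := Nat.ceil_lt_add_one (by positivity : 0 ≤ L / 2)
    have : (i : ℝ) ≤ ⌈L / 2⌉₊ := by exact_mod_cast hi
    linarith
  calc log (3 * (i + 1) * (i + 2) / C) ≤ log ((√3 * (L / 2 + 3)) ^ 2) := by
        refine log_le_log (by positivity) ?_
        rw [mul_pow, sq_sqrt zero_le_three]
        calc 3 * ((i : ℝ) + 1) * (i + 2) / C ≤ 3 * ((i : ℝ) + 1) * (i + 2) :=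
              div_le_self (by positivity) hC
          _ ≤ 3 * (L / 2 + 3) ^ 2 := by nlinarith
    _ = 2 * log (√3 * (L / 2 + 3)) := by rw [log_pow, Nat.cast_ofNat]

lemma zpow_neg_div_mul_le_half {D G : ℝ} (hD : 0 < D) (hG : 0 < G) (i : ℕ) :
    (2 : ℝ) ^ (-(i : ℤ)) / (5 * D * G) * (D * G) ≤ 1 / 2 := by
  have : (2 : ℝ) ^ (-(i : ℤ)) ≤ 1 := zpow_le_one_of_nonpos₀ one_le_two (by simp)
  rw [show 5 * D * G = 5 * (D * G) by ring, div_mul_eq_mul_div,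
    mul_div_mul_right _ _ (mul_pos hD hG).ne']
  linarith

lemma one_div_sqrt_mul_le_half {D G : ℝ} (hD : 0 < D) (hG : 0 < G) {T : ℕ} (hT : 1 ≤ T) :
    1 / (2 * G * D * √T) * (D * G) ≤ 1 / 2 := by
  have : 1 ≤ √(T : ℝ) := one_le_sqrt.mpr (by exact_mod_cast hT)
  rw [show 2 * G * D * √T = 2 * √T * (D * G) by ring, div_mul_eq_mul_div,
    mul_div_mul_right _ _ (mul_pos hD hG).ne']
  gcongr
  linarith

theorem surrogate_regret_le_log {E : Type*} [NormedAddCommGroup E] [InnerProductSpace ℝ E]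
    {T N : ℕ} {G D ηc πc : ℝ} {η πs πl : ℕ → ℝ}
    (hηc : 0 < ηc) (hη : ∀ j, 0 < η j)
    (hηcDG : ηc * (D * G) ≤ 1 / 2) (hηDG : ∀ j, η j * (D * G) ≤ 1 / 2)
    (hπc : 0 < πc) (hπs : ∀ j, 0 < πs j) (hπl : ∀ j, 0 < πl j)
    {𝒟 : Set E} (hconv : Convex ℝ 𝒟) (hdiam : ∀ a ∈ 𝒟, ∀ b ∈ 𝒟, ‖a - b‖ ≤ D)
    {xc x g : ℕ → E} {xs xl : ℕ → ℕ → E}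
    (hxc : ∀ t ∈ Icc 1 T, xc t ∈ 𝒟)
    (hxs : ∀ j ≤ N, ∀ t ∈ Icc 1 T, xs j t ∈ 𝒟)
    (hxl : ∀ j ≤ N, ∀ t ∈ Icc 1 T, xl j t ∈ 𝒟)
    (hg : ∀ t ∈ Icc 1 T, ‖g t‖ ≤ G)
    {c : ℕ → E → ℝ} {s l : ℕ → ℕ → E → ℝ}
    (hc : ∀ t y, c t y = -ηc * inner ℝ (x t - y) (g t) + (ηc * G * D) ^ 2)
    (hs : ∀ j t y, s j t y = -η j * inner ℝ (x t - y) (g t) + η j ^ 2 * G ^ 2 * ‖x t - y‖ ^ 2)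
    (hl : ∀ j t y,
      l j t y = -η j * inner ℝ (x t - y) (g t) + η j ^ 2 * inner ℝ (x t - y) (g t) ^ 2)
    {Wc : ℕ → ℝ} {Ws Wl : ℕ → ℕ → ℝ}
    (hWc : ∀ t, Wc t = exp (-∑ τ ∈ Icc 1 (t - 1), c τ (xc τ)))
    (hWs : ∀ j t, Ws j t = exp (-∑ τ ∈ Icc 1 (t - 1), s j τ (xs j τ)))
    (hWl : ∀ j t, Wl j t = exp (-∑ τ ∈ Icc 1 (t - 1), l j τ (xl j τ)))
    (hx : ∀ t ∈ Icc 1 T, x t =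
      (πc * ηc * Wc t + ∑ j ∈ range (N + 1), η j * (πs j * Ws j t + πl j * Wl j t))⁻¹ •
        ((πc * ηc * Wc t) • xc t +
          ∑ j ∈ range (N + 1),
            ((πs j * η j * Ws j t) • xs j t + (πl j * η j * Wl j t) • xl j t)))
    {i : ℕ} (hi : i ≤ N) :
    (∑ t ∈ Icc 1 T, s i t (x t)) - ∑ t ∈ Icc 1 T, s i t (xs i t) ≤
        log ((πc + ∑ j ∈ range (N + 1), (πs j + πl j)) / πs i) ∧
      (∑ t ∈ Icc 1 T, l i t (x t)) - ∑ t ∈ Icc 1 T, l i t (xl i t) ≤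
        log ((πc + ∑ j ∈ range (N + 1), (πs j + πl j)) / πl i) := by
  -- experts: `none` is the convex one, `inl j` / `inr j` the `j`-th strongly convex / exp-concave
  set K : Finset (Option (ℕ ⊕ ℕ)) := insertNone ((range (N + 1)).disjSum (range (N + 1)))
  set w : Option (ℕ ⊕ ℕ) → ℝ := fun k => k.elim πc (Sum.elim πs πl)
  set rate : Option (ℕ ⊕ ℕ) → ℝ := fun k => k.elim ηc (Sum.elim η η)
  set y : ℕ → Option (ℕ ⊕ ℕ) → E := fun t k => k.elim (xc t) (Sum.elim (xs · t) (xl · t))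
  set f : ℕ → Option (ℕ ⊕ ℕ) → ℝ :=
    fun t k => k.elim (c t (xc t)) (Sum.elim (fun j => s j t (xs j t)) (fun j => l j t (xl j t)))
  have hpos : ∀ k, 0 < w k ∧ 0 < rate k := by
    rintro (_ | j | j)
    exacts [⟨hπc, hηc⟩, ⟨hπs j, hη j⟩, ⟨hπl j, hη j⟩]
  have hyD : ∀ t ∈ Icc 1 T, ∀ k ∈ K, y t k ∈ 𝒟 := by
    rintro t ht (_ | j | j) hk <;>
      simp only [K, mem_insertNone, Option.mem_def, Option.some.injEq, forall_eq', inl_mem_disjSum,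
        inr_mem_disjSum, mem_range, Order.lt_add_one_iff] at hk
    exacts [hxc t ht, hxs j hk t ht, hxl j hk t ht]
  have hcm : ∀ t ∈ Icc 1 T, x t =
      K.centerMass (fun k => w k * rate k * exp (-∑ τ ∈ Icc 1 (t - 1), f τ k)) (y t) := by
    intro t ht
    rw [hx t ht, centerMass, sum_insertNone_disjSum_self, sum_insertNone_disjSum_self]
    simp only [w, rate, y, f, Option.elim, Sum.elim_inl, Sum.elim_inr, ← hWc, ← hWs, ← hWl]
    congr 3
    exact sum_congr rfl fun j _ => by ring
  have hmem : ∀ t ∈ Icc 1 T, x t ∈ 𝒟 := fun t ht => by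
    have hv : ∀ k, 0 < w k * rate k * exp (-∑ τ ∈ Icc 1 (t - 1), f τ k) := fun k =>
      mul_pos (mul_pos (hpos k).1 (hpos k).2) (exp_pos _)
    rw [hcm t ht]
    exact hconv.centerMass_mem (fun k _ => (hv k).le)
      (sum_pos (fun k _ => hv k) ⟨none, by simp [K]⟩) (hyD t ht)
  have hf : ∀ t ∈ Icc 1 T, ∀ k ∈ K, exp (-f t k) ≤ 1 + rate k * inner ℝ (x t - y t k) (g t) := by
    intro t ht k hk
    have hxy : ‖x t - y t k‖ ≤ D := hdiam _ (hmem t ht) _ (hyD t ht k hk)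
    rcases k with _ | j | j
    · simp only [f, rate, y, Option.elim, hc] at hxy ⊢
      exact exp_neg_convexSurrogate_le hηc.le hηcDG hxy (hg t ht)
    · simp only [f, rate, y, Option.elim, Sum.elim_inl, hs] at hxy ⊢
      exact exp_neg_stronglyConvexSurrogate_le (hη j).le (hηDG j) hxy (hg t ht)
    · simp only [f, rate, y, Option.elim, Sum.elim_inr, hl] at hxy ⊢
      exact exp_neg_expConcaveSurrogate_le (hη j).le (hηDG j) hxy (hg t ht)
  have hregret : ∀ k ∈ K, -∑ t ∈ Icc 1 T, f t k ≤ log ((∑ j ∈ K, w j) / w k) := fun k hk =>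
    tilted_exp_weights_regret_le K w rate (fun k _ => (hpos k).1) (fun k _ => (hpos k).2) T f x g y
      hcm hf hk
  have hiK : some (.inl i) ∈ K ∧ some (.inr i) ∈ K := by
    simp only [K, mem_insertNone, Option.mem_def, Option.some.injEq, forall_eq', inl_mem_disjSum,
      inr_mem_disjSum, mem_range, Order.lt_add_one_iff]
    exact ⟨hi, hi⟩
  have hs0 : ∀ t, s i t (x t) = 0 := fun t => by simp [hs]
  have hl0 : ∀ t, l i t (x t) = 0 := fun t => by simp [hl]
  have hwK : ∑ k ∈ K, w k = πc + ∑ j ∈ range (N + 1), (πs j + πl j) :=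
    sum_insertNone_disjSum_self _ w
  rw [sum_eq_zero fun t _ => hs0 t, sum_eq_zero fun t _ => hl0 t, zero_sub, zero_sub, ← hwK]
  exact ⟨hregret _ hiK.1, hregret _ hiK.2⟩

theorem maler_meta_regret_experts_general
    (d T : ℕ) (hT : 1 ≤ T)
    (G D : ℝ) (hG : 0 < G) (hD : 0 < D)
    (N : ℕ) (hN : N = ⌈Real.logb 2 T / 2⌉₊)
    (η : ℕ → ℝ) (hη : ∀ i, η i = (2 : ℝ)^(-(i : ℤ)) / (5 * D * G))
    (ηc : ℝ) (hηc : ηc = 1 / (2 * G * D * Real.sqrt T))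
    (C : ℝ) (hC : C = 1 + 1 / (N + 1))
    (πc : ℝ) (hπc : πc = 1 / 3)
    (πs πl : ℕ → ℝ)
    (hπs : ∀ i, πs i = C / (3 * (i + 1) * (i + 2)))
    (hπl : ∀ i, πl i = C / (3 * (i + 1) * (i + 2)))
    (𝒟 : Set (EuclideanSpace ℝ (Fin d))) (hconv : Convex ℝ 𝒟)
    (hdiam : ∀ a ∈ 𝒟, ∀ b ∈ 𝒟, ‖a - b‖ ≤ D)
    (xc : ℕ → EuclideanSpace ℝ (Fin d))
    (xs xl : ℕ → ℕ → EuclideanSpace ℝ (Fin d))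
    (g : ℕ → EuclideanSpace ℝ (Fin d))
    (hxc : ∀ t ∈ Finset.Icc 1 T, xc t ∈ 𝒟)
    (hxs : ∀ i ≤ N, ∀ t ∈ Finset.Icc 1 T, xs i t ∈ 𝒟)
    (hxl : ∀ i ≤ N, ∀ t ∈ Finset.Icc 1 T, xl i t ∈ 𝒟)
    (hg : ∀ t ∈ Finset.Icc 1 T, ‖g t‖ ≤ G)
    (x : ℕ → EuclideanSpace ℝ (Fin d))
    (c : ℕ → EuclideanSpace ℝ (Fin d) → ℝ)
    (hc : ∀ t y, c t y = -ηc * (inner ℝ (x t - y) (g t) : ℝ) + (ηc * G * D)^2)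
    (s l : ℕ → ℕ → EuclideanSpace ℝ (Fin d) → ℝ)
    (hs : ∀ i t y, s i t y =
      -(η i) * (inner ℝ (x t - y) (g t) : ℝ) + (η i)^2 * G^2 * ‖x t - y‖^2)
    (hl : ∀ i t y, l i t y =
      -(η i) * (inner ℝ (x t - y) (g t) : ℝ) + (η i)^2 * (inner ℝ (x t - y) (g t) : ℝ)^2)
    (Wc : ℕ → ℝ)
    (hWc : ∀ t, Wc t = Real.exp (-(∑ τ ∈ Finset.Icc 1 (t - 1), c τ (xc τ))))
    (Ws Wl : ℕ → ℕ → ℝ)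
    (hWs : ∀ i t, Ws i t = Real.exp (-(∑ τ ∈ Finset.Icc 1 (t - 1), s i τ (xs i τ))))
    (hWl : ∀ i t, Wl i t = Real.exp (-(∑ τ ∈ Finset.Icc 1 (t - 1), l i τ (xl i τ))))
    (hx : ∀ t ∈ Finset.Icc 1 T, x t =
      (πc * ηc * Wc t +
        ∑ i ∈ Finset.range (N + 1), η i * (πs i * Ws i t + πl i * Wl i t))⁻¹ •
      ((πc * ηc * Wc t) • xc t +
        ∑ i ∈ Finset.range (N + 1),
          ((πs i * η i * Ws i t) • xs i t + (πl i * η i * Wl i t) • xl i t))) :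
    ∀ i ≤ N,
      (∑ t ∈ Finset.Icc 1 T, s i t (x t)) - (∑ t ∈ Finset.Icc 1 T, s i t (xs i t))
        ≤ 2 * Real.log (Real.sqrt 3 * (Real.logb 2 T / 2 + 3)) ∧
      (∑ t ∈ Finset.Icc 1 T, l i t (x t)) - (∑ t ∈ Finset.Icc 1 T, l i t (xl i t))
        ≤ 2 * Real.log (Real.sqrt 3 * (Real.logb 2 T / 2 + 3)) := by
  intro i hi
  have hT' : (0 : ℝ) < T := by exact_mod_cast hT
  have hC1 : 1 ≤ C := by rw [hC]; simp only [le_add_iff_nonneg_right]; positivity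
  have hsum : πc + ∑ j ∈ range (N + 1), (πs j + πl j) = 1 := by
    simp only [hπc, hπs, hπl]
    exact one_third_add_sum_priors hC
  have hlog : log (1 / (C / (3 * (i + 1) * (i + 2)))) ≤ 2 * log (√3 * (logb 2 T / 2 + 3)) := by
    rw [one_div_div]
    exact log_inv_prior_le (logb_nonneg one_lt_two (by exact_mod_cast hT)) hC1 (hN ▸ hi)
  have hregret := surrogate_regret_le_log (by rw [hηc]; positivity)
    (fun j => by rw [hη]; positivity)
    (hηc ▸ one_div_sqrt_mul_le_half hD hG hT) (fun j => (hη j) ▸ zpow_neg_div_mul_le_half hD hG j)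
    (by rw [hπc]; norm_num) (fun j => by rw [hπs]; positivity) (fun j => by rw [hπl]; positivity)
    hconv hdiam hxc hxs hxl hg hc hs hl hWc hWs hWl hx hi
  rw [hsum, hπs, hπl] at hregret
  exact ⟨hregret.1.trans hlog, hregret.2.trans hlog⟩

theorem maler_meta_regret_experts
    (d T : ℕ) (hd : 1 ≤ d) (hT : 1 ≤ T)
    (G D : ℝ) (hG : 0 < G) (hD : 0 < D)
    (N : ℕ) (hN : N = ⌈Real.logb 2 T / 2⌉₊)
    (η : ℕ → ℝ) (hη : ∀ i, η i = (2 : ℝ)^(-(i : ℤ)) / (5 * D * G))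
    (ηc : ℝ) (hηc : ηc = 1 / (2 * G * D * Real.sqrt T))
    (C : ℝ) (hC : C = 1 + 1 / (N + 1))
    (πc : ℝ) (hπc : πc = 1 / 3)
    (πs πl : ℕ → ℝ)
    (hπs : ∀ i, πs i = C / (3 * (i + 1) * (i + 2)))
    (hπl : ∀ i, πl i = C / (3 * (i + 1) * (i + 2)))
    (𝒟 : Set (EuclideanSpace ℝ (Fin d))) (hconv : Convex ℝ 𝒟)
    (hdiam : ∀ a ∈ 𝒟, ∀ b ∈ 𝒟, ‖a - b‖ ≤ D)
    (xc : ℕ → EuclideanSpace ℝ (Fin d))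
    (xs xl : ℕ → ℕ → EuclideanSpace ℝ (Fin d))
    (g : ℕ → EuclideanSpace ℝ (Fin d))
    (hxc : ∀ t ∈ Finset.Icc 1 T, xc t ∈ 𝒟)
    (hxs : ∀ i ≤ N, ∀ t ∈ Finset.Icc 1 T, xs i t ∈ 𝒟)
    (hxl : ∀ i ≤ N, ∀ t ∈ Finset.Icc 1 T, xl i t ∈ 𝒟)
    (hg : ∀ t ∈ Finset.Icc 1 T, ‖g t‖ ≤ G)
    (x : ℕ → EuclideanSpace ℝ (Fin d))
    (c : ℕ → EuclideanSpace ℝ (Fin d) → ℝ)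
    (hc : ∀ t y, c t y = -ηc * (inner ℝ (x t - y) (g t) : ℝ) + (ηc * G * D)^2)
    (s l : ℕ → ℕ → EuclideanSpace ℝ (Fin d) → ℝ)
    (hs : ∀ i t y, s i t y =
      -(η i) * (inner ℝ (x t - y) (g t) : ℝ) + (η i)^2 * G^2 * ‖x t - y‖^2)
    (hl : ∀ i t y, l i t y =
      -(η i) * (inner ℝ (x t - y) (g t) : ℝ) + (η i)^2 * (inner ℝ (x t - y) (g t) : ℝ)^2)
    (Wc : ℕ → ℝ)
    (hWc : ∀ t, Wc t = Real.exp (-(∑ τ ∈ Finset.Icc 1 (t - 1), c τ (xc τ))))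
    (Ws Wl : ℕ → ℕ → ℝ)
    (hWs : ∀ i t, Ws i t = Real.exp (-(∑ τ ∈ Finset.Icc 1 (t - 1), s i τ (xs i τ))))
    (hWl : ∀ i t, Wl i t = Real.exp (-(∑ τ ∈ Finset.Icc 1 (t - 1), l i τ (xl i τ))))
    (hx : ∀ t ∈ Finset.Icc 1 T, x t =
      (πc * ηc * Wc t +
        ∑ i ∈ Finset.range (N + 1), η i * (πs i * Ws i t + πl i * Wl i t))⁻¹ •
      ((πc * ηc * Wc t) • xc t +
        ∑ i ∈ Finset.range (N + 1),
          ((πs i * η i * Ws i t) • xs i t + (πl i * η i * Wl i t) • xl i t))) :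
    ∀ i ≤ N,
      (∑ t ∈ Finset.Icc 1 T, s i t (x t)) - (∑ t ∈ Finset.Icc 1 T, s i t (xs i t))
        ≤ 2 * Real.log (Real.sqrt 3 * (Real.logb 2 T / 2 + 3)) ∧
      (∑ t ∈ Finset.Icc 1 T, l i t (x t)) - (∑ t ∈ Finset.Icc 1 T, l i t (xl i t))
        ≤ 2 * Real.log (Real.sqrt 3 * (Real.logb 2 T / 2 + 3)) :=
  maler_meta_regret_experts_general d T hT G D hG hD N hN η hη ηc hηc C hC πc hπc πs πl hπs hπl 𝒟
    hconv hdiam xc xs xl g hxc hxs hxl hg x c hc s l hs hl Wc hWc Ws Wl hWs hWl hx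
end

section
/- Let d ≥ 1, let T ≥ 2 be an integer, let G, D > 0, let 𝒟 ⊆ ℝ^d be a convex set of diameter at most D, let f_1,…,f_T : ℝ^d → ℝ be convex differentiable functions, let x_t, x* ∈ 𝒟, set g_t = ∇f_t(x_t) with ‖g_t‖ ≤ G, and set A = 2 ln(√3((log₂ T)/2 + 3)) + 1 + ln T and V = G² Σ_{t=1}^T ‖x_t − x*‖². Let η_i = 2^{−i}/(5DG) for i = 0,…,⌈(log₂ T)/2⌉, and for each i let y_t^i ∈ 𝒟 (t = 1,…,T). If for every i both Σ_{t=1}^T s_t^{η_i}(x_t) − Σ_{t=1}^T s_t^{η_i}(y_t^i) ≤ 2 ln(√3((log₂ T)/2 + 3)) and Σ_{t=1}^T s_t^{η_i}(y_t^i) − Σ_{t=1}^T s_t^{η_i}(x*) ≤ 1 + ln T hold, then Σ_{t=1}^T f_t(x_t) − Σ_{t=1}^T f_t(x*) ≤ 3√(V·A) + 10GD·A. -/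
/-! Convexity bounds the regret by the linearised regret `R = ∑ ⟪x_t - x*, g_t⟫`. Every surrogate
loss vanishes at `x_t`, so adding the meta- and expert-regret bounds for a rate `η` gives
`η R - η² V ≤ A`, i.e. `R ≤ A / η + η V`, for every rate of the grid. Either the optimal
rate `√(A / V)` exceeds the largest grid rate `η₀ = 1 / (5DG)`, and `η₀` itself gives
`R ≤ 2A / η₀ = 10GDA`; or, because `V ≤ G²D²T` makes the smallest grid rate small enough,
it lies between some grid rate and twice that rate, which gives `R ≤ 3√(VA)`. -/

open Finset Real

theorem ConvexOn.sub_le_inner_of_hasGradientAt {E : Type*} [NormedAddCommGroup E]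
    [InnerProductSpace ℝ E] [CompleteSpace E] {s : Set E} {f : E → ℝ} {g a b : E}
    (hf : ConvexOn ℝ s f) (ha : a ∈ s) (hb : b ∈ s) (hgrad : HasGradientAt f g a) :
    f a - f b ≤ inner ℝ (a - b) g := by
  have hline : HasDerivAt (f ∘ AffineMap.lineMap (k := ℝ) a b) (inner ℝ g (b - a)) 0 := by
    have hf' : HasFDerivAt f (InnerProductSpace.toDual ℝ E g)
        (AffineMap.lineMap a b (0 : ℝ)) := by
      simpa using hgrad.hasFDerivAt
    simpa using hf'.comp_hasDerivAt (0 : ℝ) AffineMap.hasDerivAt_lineMap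
  have hslope := (hf.comp_affineMap (AffineMap.lineMap a b)).le_slope_of_hasDerivAt
    (by simpa using ha) (by simpa using hb) one_pos hline
  have hinner : inner ℝ (a - b) g = -inner ℝ g (b - a) := by
    rw [real_inner_comm, ← inner_neg_right, neg_sub]
  simp only [slope_def_field, Function.comp_apply, AffineMap.lineMap_apply_one,
    AffineMap.lineMap_apply_zero, sub_zero, div_one] at hslope
  linarith

theorem Finset.sum_sub_sum_le_sum_inner_of_hasGradientAt {ι E : Type*} [NormedAddCommGroup E]
    [InnerProductSpace ℝ E] [CompleteSpace E] (S : Finset ι) {f : ι → E → ℝ} {g x : ι → E}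
    {u : E} (hf : ∀ t ∈ S, ConvexOn ℝ Set.univ (f t))
    (hgrad : ∀ t ∈ S, HasGradientAt (f t) (g t) (x t)) :
    ∑ t ∈ S, f t (x t) - ∑ t ∈ S, f t u ≤ ∑ t ∈ S, inner ℝ (x t - u) (g t) := by
  rw [← sum_sub_distrib]
  exact sum_le_sum fun t ht ↦
    (hf t ht).sub_le_inner_of_hasGradientAt (Set.mem_univ _) (Set.mem_univ _) (hgrad t ht)

theorem sum_sq_norm_sub_le {ι E : Type*} [SeminormedAddCommGroup E] {K : Set E} {D : ℝ}
    (hK : ∀ a ∈ K, ∀ b ∈ K, ‖a - b‖ ≤ D) {S : Finset ι} {x : ι → E} {u : E}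
    (hx : ∀ t ∈ S, x t ∈ K) (hu : u ∈ K) : ∑ t ∈ S, ‖x t - u‖ ^ 2 ≤ #S * D ^ 2 := by
  simpa using sum_le_card_nsmul _ _ (D ^ 2) fun t ht ↦
    pow_le_pow_left₀ (norm_nonneg _) (hK _ (hx t ht) _ hu) 2

theorem le_div_add_mul_of_mul_sub_le {η R A V : ℝ} (hη : 0 < η) (h : η * R - η ^ 2 * V ≤ A) :
    R ≤ A / η + η * V := by
  rw [div_add' _ _ _ hη.ne', le_div_iff₀ hη]
  nlinarith

theorem div_add_mul_le_two_mul_div {η A V : ℝ} (hη : 0 < η) (hA : 0 ≤ A) (hV : 0 ≤ V)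
    (h : η * √V ≤ √A) : A / η + η * V ≤ 2 * (A / η) := by
  have hsq : η * V * η ≤ A :=
    calc η * V * η = η * √V * (η * √V) := by linear_combination (-η ^ 2) * mul_self_sqrt hV
      _ ≤ √A * √A := mul_self_le_mul_self (by positivity) h
      _ = A := mul_self_sqrt hA
  have : η * V ≤ A / η := by rwa [le_div_iff₀ hη]
  linarith

theorem div_add_mul_le_three_mul_sqrt {η A V : ℝ} (hη : 0 < η) (hA : 0 ≤ A) (hV : 0 ≤ V)
    (hle : η * √V ≤ √A) (hlt : √A < 2 * η * √V) : A / η + η * V ≤ 3 * √(V * A) := by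
  have hAη : A / η ≤ 2 * (√V * √A) := by
    rw [div_le_iff₀ hη]
    nlinarith [mul_le_mul_of_nonneg_left hlt.le (sqrt_nonneg A), mul_self_sqrt hA]
  have hηV : η * V ≤ √V * √A := by
    nlinarith [mul_le_mul_of_nonneg_right hle (sqrt_nonneg V), mul_self_sqrt hV]
  rw [sqrt_mul hV]
  linarith

theorem exists_le_lt_two_mul_of_halving {a : ℕ → ℝ} (ha : ∀ i, a i = 2 * a (i + 1)) {u : ℝ}
    {N : ℕ} (hN : a N ≤ u) (h0 : u < a 0) : ∃ i ≤ N, a i ≤ u ∧ u < 2 * a i := by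
  induction N with
  | zero => exact absurd hN h0.not_ge
  | succ n ih =>
    rcases le_or_gt (a n) u with hn | hn
    · obtain ⟨i, hi, h⟩ := ih hn
      exact ⟨i, by omega, h⟩
    · exact ⟨n + 1, le_rfl, hN, ha n ▸ hn⟩

theorem le_three_mul_sqrt_add_of_halving {η : ℕ → ℝ} {R A V : ℝ} {N : ℕ} (hA : 0 ≤ A)
    (hV : 0 ≤ V) (hη : ∀ i, 0 < η i) (hhalf : ∀ i, η i = 2 * η (i + 1))
    (hR : ∀ i ≤ N, R ≤ A / η i + η i * V) (hN : η N * √V ≤ √A) :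
    R ≤ 3 * √(V * A) + 2 * (A / η 0) := by
  have hA0 : 0 ≤ A / η 0 := div_nonneg hA (hη 0).le
  rcases lt_or_ge (√A) (η 0 * √V) with h0 | h0
  · obtain ⟨i, hi, hle, hlt⟩ := exists_le_lt_two_mul_of_halving (a := fun i ↦ η i * √V)
      (fun i ↦ by rw [hhalf i]; ring) hN h0
    have := div_add_mul_le_three_mul_sqrt (hη i) hA hV hle (by linarith)
    linarith [hR i hi]
  · have := div_add_mul_le_two_mul_div (hη 0) hA hV h0
    linarith [hR 0 (Nat.zero_le N), sqrt_nonneg (V * A)]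

theorem sqrt_le_two_pow_ceil_logb {T : ℝ} (hT : 0 < T) : √T ≤ 2 ^ ⌈logb 2 T / 2⌉₊ := by
  calc √T = (2 : ℝ) ^ (logb 2 T / 2) := by
        rw [div_eq_mul_one_div, rpow_mul zero_le_two, rpow_logb two_pos (by norm_num) hT,
          sqrt_eq_rpow]
    _ ≤ (2 : ℝ) ^ (⌈logb 2 T / 2⌉₊ : ℝ) := rpow_le_rpow_of_exponent_le one_le_two (Nat.le_ceil _)
    _ = 2 ^ ⌈logb 2 T / 2⌉₊ := rpow_natCast 2 _

theorem two_zpow_neg_ceil_logb_div_mul_sqrt_le_one {c T V : ℝ} (hc : 0 < c) (hT : 0 < T)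
    (hV : V ≤ c ^ 2 * T) : (2 : ℝ) ^ (-(⌈logb 2 T / 2⌉₊ : ℤ)) / c * √V ≤ 1 := by
  have hsqrtV : √V ≤ c * 2 ^ ⌈logb 2 T / 2⌉₊ := calc
    √V ≤ √(c ^ 2 * T) := sqrt_le_sqrt hV
    _ = c * √T := by rw [sqrt_mul (by positivity), sqrt_sq hc.le]
    _ ≤ c * 2 ^ ⌈logb 2 T / 2⌉₊ := by gcongr; exact sqrt_le_two_pow_ceil_logb hT
  rw [zpow_neg, zpow_natCast, div_mul_eq_mul_div, div_le_iff₀ hc,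
    inv_mul_le_iff₀ (by positivity)]
  linarith

theorem one_le_two_mul_log_add_one_add_log {T : ℝ} (hT : 1 ≤ T) :
    1 ≤ 2 * log (√3 * (logb 2 T / 2 + 3)) + 1 + log T := by
  have : 1 ≤ √3 * (logb 2 T / 2 + 3) := by
    nlinarith [one_lt_sqrt_two.trans (sqrt_lt_sqrt zero_le_two (by norm_num : (2 : ℝ) < 3)),
      logb_nonneg one_lt_two hT]
  linarith [log_nonneg this, log_nonneg hT]

theorem maler_strongly_convex_data_dependent_regret_general
    (d T : ℕ) (hT : 2 ≤ T)
    (G D : ℝ) (hG : 0 < G) (hD : 0 < D)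
    (𝒟 : Set (EuclideanSpace ℝ (Fin d)))
    (hdiam : ∀ a ∈ 𝒟, ∀ b ∈ 𝒟, ‖a - b‖ ≤ D)
    (f : ℕ → EuclideanSpace ℝ (Fin d) → ℝ)
    (hfconv : ∀ t ∈ Finset.Icc 1 T, ConvexOn ℝ Set.univ (f t))
    (x : ℕ → EuclideanSpace ℝ (Fin d)) (xstar : EuclideanSpace ℝ (Fin d))
    (hx : ∀ t ∈ Finset.Icc 1 T, x t ∈ 𝒟) (hxstar : xstar ∈ 𝒟)
    (g : ℕ → EuclideanSpace ℝ (Fin d))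
    (hgrad : ∀ t ∈ Finset.Icc 1 T, HasGradientAt (f t) (g t) (x t))
    (A V : ℝ)
    (hA : A = 2 * Real.log (Real.sqrt 3 * (Real.logb 2 T / 2 + 3)) + 1 + Real.log T)
    (hV : V = G^2 * ∑ t ∈ Finset.Icc 1 T, ‖x t - xstar‖^2)
    (η : ℕ → ℝ) (hη : ∀ i, η i = (2 : ℝ)^(-(i : ℤ)) / (5 * D * G))
    (y : ℕ → ℕ → EuclideanSpace ℝ (Fin d))
    (s : ℕ → ℕ → EuclideanSpace ℝ (Fin d) → ℝ)
    (hs : ∀ i t z, s i t z =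
      -(η i) * (inner ℝ (x t - z) (g t) : ℝ) + (η i)^2 * G^2 * ‖x t - z‖^2)
    (hmeta : ∀ i ≤ ⌈Real.logb 2 T / 2⌉₊,
      (∑ t ∈ Finset.Icc 1 T, s i t (x t)) - (∑ t ∈ Finset.Icc 1 T, s i t (y i t))
        ≤ 2 * Real.log (Real.sqrt 3 * (Real.logb 2 T / 2 + 3)))
    (hexpert : ∀ i ≤ ⌈Real.logb 2 T / 2⌉₊,
      (∑ t ∈ Finset.Icc 1 T, s i t (y i t)) - (∑ t ∈ Finset.Icc 1 T, s i t xstar)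
        ≤ 1 + Real.log T) :
    (∑ t ∈ Finset.Icc 1 T, f t (x t)) - (∑ t ∈ Finset.Icc 1 T, f t xstar)
      ≤ 3 * Real.sqrt (V * A) + 10 * G * D * A := by
  set N := ⌈logb 2 T / 2⌉₊
  set R := ∑ t ∈ Icc 1 T, inner ℝ (x t - xstar) (g t) with hR
  have hA1 : 1 ≤ A := hA ▸ one_le_two_mul_log_add_one_add_log (by exact_mod_cast (by omega))
  have hV0 : 0 ≤ V := hV ▸ by positivity
  have hη0 : ∀ i, 0 < η i := fun i ↦ hη i ▸ by positivity
  have hhalf : ∀ i, η i = 2 * η (i + 1) := fun i ↦ by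
    rw [hη, hη, Nat.cast_succ, neg_add, zpow_add₀ two_ne_zero]
    field_simp
  have hsurrogate : ∀ i ≤ N, R ≤ A / η i + η i * V := fun i hi ↦ by
    have hsum_x : ∑ t ∈ Icc 1 T, s i t (x t) = 0 := sum_eq_zero fun t _ ↦ by simp [hs]
    have hsum_xstar : ∑ t ∈ Icc 1 T, s i t xstar = -η i * R + η i ^ 2 * V := by
      simp only [hR, hV, hs, sum_add_distrib, ← mul_sum]
      ring
    refine le_div_add_mul_of_mul_sub_le (hη0 i) ?_
    linarith [hmeta i hi, hexpert i hi]
  have hgrid : η N * √V ≤ √A := by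
    have hVT : V ≤ (5 * D * G) ^ 2 * T := by
      have := sum_sq_norm_sub_le hdiam hx hxstar
      rw [Nat.card_Icc, Nat.add_sub_cancel] at this
      rw [hV]
      nlinarith
    rw [hη]
    linarith [two_zpow_neg_ceil_logb_div_mul_sqrt_le_one (by positivity) (by positivity) hVT,
      one_le_sqrt.mpr hA1]
  calc _ ≤ R := sum_sub_sum_le_sum_inner_of_hasGradientAt _ hfconv hgrad
    _ ≤ 3 * √(V * A) + 2 * (A / η 0) :=
      le_three_mul_sqrt_add_of_halving (by positivity) hV0 hη0 hhalf hsurrogate hgrid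
    _ = 3 * √(V * A) + 10 * G * D * A := by
      rw [hη]
      field_simp
      ring

theorem maler_strongly_convex_data_dependent_regret
    (d T : ℕ) (hd : 1 ≤ d) (hT : 2 ≤ T)
    (G D : ℝ) (hG : 0 < G) (hD : 0 < D)
    (𝒟 : Set (EuclideanSpace ℝ (Fin d))) (hconv : Convex ℝ 𝒟)
    (hdiam : ∀ a ∈ 𝒟, ∀ b ∈ 𝒟, ‖a - b‖ ≤ D)
    (f : ℕ → EuclideanSpace ℝ (Fin d) → ℝ)
    (hfconv : ∀ t ∈ Finset.Icc 1 T, ConvexOn ℝ Set.univ (f t))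
    (x : ℕ → EuclideanSpace ℝ (Fin d)) (xstar : EuclideanSpace ℝ (Fin d))
    (hx : ∀ t ∈ Finset.Icc 1 T, x t ∈ 𝒟) (hxstar : xstar ∈ 𝒟)
    (g : ℕ → EuclideanSpace ℝ (Fin d))
    (hgrad : ∀ t ∈ Finset.Icc 1 T, HasGradientAt (f t) (g t) (x t))
    (hg : ∀ t ∈ Finset.Icc 1 T, ‖g t‖ ≤ G)
    (A V : ℝ)
    (hA : A = 2 * Real.log (Real.sqrt 3 * (Real.logb 2 T / 2 + 3)) + 1 + Real.log T)
    (hV : V = G^2 * ∑ t ∈ Finset.Icc 1 T, ‖x t - xstar‖^2)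
    (η : ℕ → ℝ) (hη : ∀ i, η i = (2 : ℝ)^(-(i : ℤ)) / (5 * D * G))
    (y : ℕ → ℕ → EuclideanSpace ℝ (Fin d))
    (hy : ∀ i ≤ ⌈Real.logb 2 T / 2⌉₊, ∀ t ∈ Finset.Icc 1 T, y i t ∈ 𝒟)
    (s : ℕ → ℕ → EuclideanSpace ℝ (Fin d) → ℝ)
    (hs : ∀ i t z, s i t z =
      -(η i) * (inner ℝ (x t - z) (g t) : ℝ) + (η i)^2 * G^2 * ‖x t - z‖^2)
    (hmeta : ∀ i ≤ ⌈Real.logb 2 T / 2⌉₊,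
      (∑ t ∈ Finset.Icc 1 T, s i t (x t)) - (∑ t ∈ Finset.Icc 1 T, s i t (y i t))
        ≤ 2 * Real.log (Real.sqrt 3 * (Real.logb 2 T / 2 + 3)))
    (hexpert : ∀ i ≤ ⌈Real.logb 2 T / 2⌉₊,
      (∑ t ∈ Finset.Icc 1 T, s i t (y i t)) - (∑ t ∈ Finset.Icc 1 T, s i t xstar)
        ≤ 1 + Real.log T) :
    (∑ t ∈ Finset.Icc 1 T, f t (x t)) - (∑ t ∈ Finset.Icc 1 T, f t xstar)
      ≤ 3 * Real.sqrt (V * A) + 10 * G * D * A :=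
  maler_strongly_convex_data_dependent_regret_general d T hT G D hG hD 𝒟 hdiam f hfconv x xstar hx
    hxstar g hgrad A V hA hV η hη y s hs hmeta hexpert
end
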